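/- arXiv:2109.11702 — 5 statements merged into one kernel-verified Lean document; each statement's English description precedes it below -/
import Mathlib

section
/- Let $K$ be a field, $\GL$ a group acting on $K$ by field automorphisms, and $V$ a semi-linear representation of $\GL$ over $K$ (a $K$-vector space with an additive $\GL$-action satisfying $g(av) = (ga)(gv)$). Let $\phi \colon V \to V$ be a $K$-linear $\GL$-equivariant endomorphism of $V$, and suppose $\phi$ satisfies some monic polynomial with coefficients in $K$. Then the monic polynomial of minimal degree satisfied by $\phi$ has all of its coefficients fixed by the action of $\GL$ on $K$. -/
open Polynomial

/-- Let `K` be a field with an action of a group `G` by field automorphisms,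
`V` a semi-linear representation of `G` over `K`, and `φ` a `K`-linear `G`-equivariant
endomorphism of `V` satisfying some monic polynomial over `K`.  Then the monic polynomial
of minimal degree satisfied by `φ` has all coefficients fixed by `G`. -/
theorem stmt_3 {G K : Type*} [Group G] [Field K] [MulSemiringAction G K]
    {V : Type*} [AddCommGroup V] [Module K V] [DistribMulAction G V]
    (hsemi : ∀ (g : G) (a : K) (v : V), g • (a • v) = (g • a) • (g • v))
    (φ : Module.End K V)
    (hequiv : ∀ (g : G) (v : V), φ (g • v) = g • φ v)
    (p : Polynomial K) (hmonic : p.Monic)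
    (hann : Polynomial.aeval φ p = 0)
    (hmin : ∀ q : Polynomial K, q.Monic → Polynomial.aeval φ q = 0 → p.degree ≤ q.degree) :
    ∀ (g : G) (n : ℕ), g • p.coeff n = p.coeff n := by
  intro g n
  set σ : K →+* K := MulSemiringAction.toRingHom G K g with hσ
  have hσinj : Function.Injective σ := σ.injective
  have hpow : ∀ (k : ℕ) (v : V), (φ ^ k) (g • v) = g • (φ ^ k) v := by
    intro k
    induction k with
    | zero => intro v; simp
    | succ k ih =>
      intro v
      rw [pow_succ]
      simp only [Module.End.mul_apply]
      rw [hequiv, ih]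
  have key : ∀ (r : Polynomial K) (v : V),
      (aeval φ (r.map σ)) (g • v) = g • ((aeval φ r) v) := by
    intro r v
    induction r using Polynomial.induction_on' with
    | add a b ha hb => simp [Polynomial.map_add, ha, hb, smul_add]
    | monomial m a =>
      rw [Polynomial.map_monomial]
      simp only [aeval_monomial, Module.End.mul_apply, Module.algebraMap_end_apply]
      rw [hpow, hsemi]
      rfl
  set q := p.map σ with hq
  have hqmonic : q.Monic := hmonic.map σ
  have hqann : aeval φ q = 0 := by
    ext v
    have h := key p (g⁻¹ • v)
    rw [smul_inv_smul, hann] at h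
    simpa using h
  have hdeg : q.degree = p.degree := degree_map_eq_of_injective hσinj p
  have hreq : p = q := by
    by_contra hne
    have hr0 : p - q ≠ 0 := sub_ne_zero.mpr hne
    have hpne : p ≠ 0 := hmonic.ne_zero
    have hdlt : (p - q).degree < p.degree :=
      degree_sub_lt hdeg.symm hpne (by rw [hmonic.leadingCoeff, hqmonic.leadingCoeff])
    set s := (p - q) * C (p - q).leadingCoeff⁻¹ with hs
    have hsmonic : s.Monic := monic_mul_leadingCoeff_inv hr0
    have hsann : aeval φ s = 0 := by
      rw [hs, map_mul, map_sub, hann, hqann, sub_zero, zero_mul]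
    have := hmin s hsmonic hsann
    rw [hs, degree_mul_leadingCoeff_inv _ hr0] at this
    exact absurd this (not_le.mpr hdlt)
  have : q.coeff n = σ (p.coeff n) := coeff_map σ n
  rw [← hreq] at this
  exact this.symm
end

section
/- Let $k$ be a field of characteristic zero, let $K$ be a field extension of $k$ equipped with an action of the infinite general linear group $\GL = \bigcup_{n\ge1} \GL_n(\mathbb{Q})$ (or any group generated by its subgroup $\SL$ of elementary matrices together with subgroups $G(m)$ fixing a given element for $m \gg 0$) by $k$-automorphisms, with $K^{\GL} = k$. Then any element $a \in K$ that is algebraic over $k$ belongs to $k$; that is, $k$ is algebraically closed within $K$. -/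
/-- Let `K` be a field of characteristic zero with an action of a group `G`
(generated, like `GL_∞`, by a subgroup `S` which is generated by subgroups that are images
of `(ℚ,+)`, together with subgroups `T m` such that every element of `K` is fixed by some
`T m` and `G = S ⬝ T m` for every `m`).  Then any element of `K` algebraic over the
invariant subfield `k = K^G` lies in `k`. -/
theorem stmt_6 {G K : Type*} [Group G] [Field K] [CharZero K] [MulSemiringAction G K]
    (S : Subgroup G) {ι : Type*} (E : ι → Subgroup G)
    (hE : ∀ i, ∃ φ : Multiplicative ℚ →* G, E i = φ.range)
    (hSgen : S = ⨆ i, E i)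
    (T : ℕ → Subgroup G)
    (hT : ∀ b : K, ∃ m : ℕ, ∀ g ∈ T m, g • b = b)
    (hdec : ∀ (m : ℕ) (g : G), ∃ s ∈ S, ∃ t ∈ T m, g = s * t)
    (a : K)
    (halg : ∃ p : Polynomial K, p ≠ 0 ∧ (∀ n, p.coeff n ∈ FixedPoints.subfield G K) ∧
      p.eval a = 0) :
    a ∈ FixedPoints.subfield G K := by
  obtain ⟨p, hp0, hcoeff, hpa⟩ := halg
  -- the polynomial is fixed by the group action
  have hfixp : ∀ g : G, g • p = p := by
    intro g
    ext n
    rw [Polynomial.coeff_smul]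
    exact hcoeff n g
  -- the action permutes the roots
  have hroot : ∀ (g : G) (x : K), p.eval x = 0 → p.eval (g • x) = 0 := by
    intro g x hx
    have := Polynomial.smul_eval_smul K g p x
    rw [hfixp g, hx, smul_zero] at this
    exact this
  -- the (finite) set of roots
  set R := {x : K // p.eval x = 0} with hR
  haveI : Fintype R := (Polynomial.finite_setOf_isRoot hp0).fintype
  haveI : DecidableEq R := Classical.decEq _
  -- the permutation representation on the roots
  let act : G →* Equiv.Perm R :=
    { toFun := fun g =>
        { toFun := fun x => ⟨g • x.1, hroot g x.1 x.2⟩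
          invFun := fun x => ⟨g⁻¹ • x.1, hroot g⁻¹ x.1 x.2⟩
          left_inv := fun x => Subtype.ext (inv_smul_smul g x.1)
          right_inv := fun x => Subtype.ext (smul_inv_smul g x.1) }
      map_one' := by
        ext x
        simp
      map_mul' := fun g h => by
        ext x
        simp [mul_smul] }
  -- any homomorphism from (ℚ,+) to a finite group is trivial
  have keyQ : ∀ (f : Multiplicative ℚ →* Equiv.Perm R) (q : Multiplicative ℚ), f q = 1 := by
    intro f q
    set n := Fintype.card (Equiv.Perm R) with hn
    have hnpos : 0 < n := Fintype.card_pos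
    have hq : (Multiplicative.ofAdd (Multiplicative.toAdd q / (n : ℚ))) ^ n = q := by
      rw [← ofAdd_nsmul, nsmul_eq_mul]
      rw [mul_div_cancel₀ _ (by exact_mod_cast hnpos.ne' : (n : ℚ) ≠ 0)]
      simp
    calc f q = f ((Multiplicative.ofAdd (Multiplicative.toAdd q / (n : ℚ))) ^ n) := by rw [hq]
    _ = (f (Multiplicative.ofAdd (Multiplicative.toAdd q / (n : ℚ)))) ^ n := map_pow f _ _
    _ = 1 := pow_card_eq_one
  -- every element of S acts trivially on the roots
  have hSfix : ∀ s ∈ S, act s = 1 := by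
    intro s hs
    rw [hSgen] at hs
    refine Subgroup.iSup_induction E (C := fun s => act s = 1) hs ?_ ?_ ?_
    · intro i g hg
      obtain ⟨φ, hφ⟩ := hE i
      rw [hφ] at hg
      obtain ⟨q, rfl⟩ := hg
      exact keyQ (act.comp φ) q
    · exact map_one act
    · intro x y hx hy
      rw [map_mul, hx, hy, one_mul]
  -- hence every element of S fixes a
  have hSa : ∀ s ∈ S, s • a = a := by
    intro s hs
    have := congrArg (fun e : Equiv.Perm R => e ⟨a, hpa⟩) (hSfix s hs)
    exact congrArg Subtype.val this
  -- conclude using the decomposition G = S ⬝ T m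
  intro g
  obtain ⟨m, hm⟩ := hT a
  obtain ⟨s, hs, t, ht, rfl⟩ := hdec m g
  show (s * t) • a = a
  rw [mul_smul, hm t ht, hSa s hs]
end

section
/- Let $\mathcal{A}$ be a $k$-linear Grothendieck abelian category in which every object is the union of its finitely generated subobjects. Let $I$ be a finitely generated object of $\mathcal{A}$ such that every monomorphism $I \to M$ with $M$ finitely generated splits. Then $I$ is an injective object of $\mathcal{A}$. -/
open CategoryTheory CategoryTheory.Limits

universe v u

/-- An object is finitely generated if whenever it is the supremum of a directed family of
subobjects, it equals one of them. -/
def FinGenObj {C : Type u} [Category.{v} C] [Abelian C] [WellPowered.{v} C] [HasLimits C]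
    [HasColimits C] (X : C) : Prop :=
  ∀ S : Set (Subobject X), S.Nonempty → DirectedOn (· ≤ ·) S → Subobject.sSup.{v} S = ⊤ → ⊤ ∈ S

/-!
AB5 makes `⊓` distribute over directed suprema of subobjects, so finite generation of a
subobject is compactness in the subobject lattice, and Zorn's lemma applies to subobjects
meeting a given one trivially.

Given a monomorphism `f : I ⟶ M`, choose `N ≤ M` maximal with `N ⊓ I = 0`. Then `I ⟶ M/N` is
essential: a subobject of `M/N` meeting `I` trivially pulls back to one of `M` containing `N`
and meeting `I` trivially. For finitely generated `Q ≤ M/N`, the object `Q ⊔ I` is finitely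
generated, so `I ⟶ Q ⊔ I` splits; the kernel of the retraction meets `I` trivially, hence
vanishes, and `Q ≤ I`. As `M/N` is the union of its finitely generated subobjects, `I ≅ M/N`,
which gives a retraction of `f`. Retractions of the monomorphisms `I ⟶ pushout` then give
injectivity.
-/

theorem IsCompactElement.orderIso_apply {α β : Type*} [PartialOrder α] [PartialOrder β]
    {k : α} (hk : IsCompactElement k) (e : α ≃o β) : IsCompactElement (e k) := by
  intro s u hne hdir hlub hle
  obtain ⟨_, ⟨x, hx, rfl⟩, hkx⟩ := hk (e.symm '' s) (e.symm u) (hne.image _)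
    (hdir.mono_comp fun _ _ h => e.symm.monotone h) (e.symm.isLUB_image'.2 hlub)
    (e.le_symm_apply.2 hle)
  exact ⟨x, hx, e.le_symm_apply.1 hkx⟩

theorem OrderIso.isCompactElement_apply_iff {α β : Type*} [PartialOrder α] [PartialOrder β]
    (e : α ≃o β) {k : α} : IsCompactElement (e k) ↔ IsCompactElement k :=
  ⟨fun h => by simpa using h.orderIso_apply e.symm, fun h => h.orderIso_apply e⟩

theorem IsCompactElement.sup {α : Type*} [CompleteLattice α] {a b : α} (ha : IsCompactElement a)
    (hb : IsCompactElement b) : IsCompactElement (a ⊔ b) := by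
  rw [CompleteLattice.isCompactElement_iff_le_of_directed_sSup_le] at ha hb ⊢
  intro s hne hdir hle
  obtain ⟨x, hx, hax⟩ := ha s hne hdir (le_sup_left.trans hle)
  obtain ⟨y, hy, hby⟩ := hb s hne hdir (le_sup_right.trans hle)
  obtain ⟨z, hz, hxz, hyz⟩ := hdir x hx y hy
  exact ⟨z, hz, sup_le (hax.trans hxz) (hby.trans hyz)⟩

theorem Set.Iic.isCompactElement_coe_iff {α : Type*} [CompleteLattice α] {a : α}
    (h : ∀ s : Set α, DirectedOn (· ≤ ·) s → a ⊓ sSup s = ⨆ b ∈ s, a ⊓ b) {b : Set.Iic a} :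
    IsCompactElement (b : α) ↔ IsCompactElement b := by
  refine ⟨Set.Iic.isCompactElement, fun hb => ?_⟩
  rw [CompleteLattice.isCompactElement_iff_le_of_directed_sSup_le] at hb ⊢
  intro s hne hdir hbs
  let t : Set (Set.Iic a) := (fun x => ⟨a ⊓ x, inf_le_left⟩) '' s
  have hbt : b ≤ sSup t := by
    rw [← Subtype.coe_le_coe, Set.Iic.coe_sSup, ← Set.image_comp, sSup_image]
    exact (le_inf b.2 hbs).trans (h s hdir).le
  obtain ⟨_, ⟨x, hx, rfl⟩, hbx⟩ :=
    hb t (hne.image _) (hdir.mono_comp fun _ _ hxy => inf_le_inf_left a hxy) hbt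
  exact ⟨x, hx, (Subtype.coe_le_coe.2 hbx).trans inf_le_right⟩

namespace CategoryTheory

variable {C : Type u} [Category.{v} C] [Abelian C]

namespace Subobject

theorem factors_iff_comp_cokernel_π_eq_zero {X Y : C} (N : Subobject Y) (h : X ⟶ Y) :
    N.Factors h ↔ h ≫ cokernel.π N.arrow = 0 := by
  refine ⟨fun hN => ?_, fun h0 => (factors_iff N h).2 ⟨_, Abelian.monoLift_comp N.arrow h h0⟩⟩
  rw [← factorThru_arrow N h hN, Category.assoc, cokernel.condition, comp_zero]

theorem disjoint_iff_factors {X : C} {A B : Subobject X} :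
    Disjoint A B ↔ ∀ ⦃Z : C⦄ (h : Z ⟶ X), A.Factors h → B.Factors h → h = 0 := by
  rw [disjoint_iff]
  refine ⟨fun hAB Z h hA hB => ?_, fun H => ?_⟩
  · rw [← bot_factors_iff_zero, ← hAB]
    exact (inf_factors h).2 ⟨hA, hB⟩
  · rw [← mk_arrow (A ⊓ B)]
    exact mk_eq_bot_iff_zero.2 (H _ (inf_arrow_factors_left A B) (inf_arrow_factors_right A B))

theorem mono_comp_cokernel_π_of_disjoint {I M : C} {f : I ⟶ M} [Mono f] {N : Subobject M}
    (h : Disjoint (mk f) N) : Mono (f ≫ cokernel.π N.arrow) := by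
  refine Preadditive.mono_of_cancel_zero _ fun z hz => zero_of_comp_mono f ?_
  refine disjoint_iff_factors.1 h (z ≫ f) ((mk_factors_iff f _).2 ⟨z, rfl⟩) ?_
  rwa [factors_iff_comp_cokernel_π_eq_zero, Category.assoc]

theorem eq_bot_of_maximal_disjoint {I M : C} {f : I ⟶ M} [Mono f] {N : Subobject M}
    (hN : Maximal (Disjoint (mk f)) N) [Mono (f ≫ cokernel.π N.arrow)]
    {T : Subobject (cokernel N.arrow)} (hT : Disjoint T (mk (f ≫ cokernel.π N.arrow))) :
    T = ⊥ := by
  let π := cokernel.π N.arrow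
  let T' := (pullback π).obj T
  have hNT' : N ≤ T' :=
    le_of_factors ((pullback_factors_iff _ _ _).2 (by rw [cokernel.condition]; exact factors_zero))
  have hdisj : Disjoint (mk f) T' := by
    refine disjoint_iff_factors.2 fun Z h hf hT' => ?_
    obtain ⟨a, rfl⟩ : ∃ a : Z ⟶ I, a ≫ f = h := (mk_factors_iff f h).1 hf
    have hπ : a ≫ f ≫ π = 0 := disjoint_iff_factors.1 hT _
      (by rw [← Category.assoc]; exact (pullback_factors_iff _ _ _).1 hT')
      ((mk_factors_iff _ _).2 ⟨a, rfl⟩)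
    exact disjoint_iff_factors.1 hN.prop _ hf
      ((factors_iff_comp_cokernel_π_eq_zero _ _).2 (by rw [Category.assoc]; exact hπ))
  have hsnd : pullback.snd T.arrow π ≫ π = 0 := by
    rw [← factors_iff_comp_cokernel_π_eq_zero]
    refine factors_of_le _ (hN.le_of_ge hdisj hNT') ((pullback_factors_iff _ _ _).2 ?_)
    rw [← pullback.condition]
    exact factors_comp_arrow _
  have : T.arrow = 0 := zero_of_epi_comp (pullback.fst T.arrow π) (by rw [pullback.condition, hsnd])
  rw [← mk_arrow T, mk_eq_bot_iff_zero.2 this]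

theorem le_mk_of_retraction {I E : C} (g : I ⟶ E) [Mono g]
    (hess : ∀ T : Subobject E, Disjoint T (mk g) → T = ⊥) {R : Subobject E} (σ : I ⟶ R)
    (hσ : σ ≫ R.arrow = g) (r : (R : C) ⟶ I) (hr : σ ≫ r = 𝟙 I) : R ≤ mk g := by
  have hker : kernel.ι r ≫ R.arrow = 0 := by
    rw [← mk_eq_bot_iff_zero]
    refine hess _ (disjoint_iff_factors.2 fun Z h hK hg => ?_)
    obtain ⟨a, rfl⟩ : ∃ a : Z ⟶ kernel r, a ≫ kernel.ι r ≫ R.arrow = h :=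
      (mk_factors_iff _ h).1 hK
    obtain ⟨b, hb⟩ : ∃ b : Z ⟶ I, b ≫ g = a ≫ kernel.ι r ≫ R.arrow := (mk_factors_iff g _).1 hg
    have hab : a ≫ kernel.ι r = b ≫ σ := by
      rw [← cancel_mono R.arrow, Category.assoc, Category.assoc, hσ, hb]
    have hb0 : b = 0 := by simpa [hr] using (hab =≫ r).symm
    rw [← hb, hb0, zero_comp]
  have : Mono r := Abelian.mono_of_kernel_ι_eq_zero _ (zero_of_comp_mono R.arrow hker)
  have hrσ : r ≫ σ = 𝟙 _ := by
    rw [← cancel_mono r, Category.assoc, hr, Category.comp_id, Category.id_comp]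
  exact le_mk_of_comm r (by rw [← hσ, reassoc_of% hrσ])

@[simps]
noncomputable def arrowCocone {M : C} {J : Type*} [Category J] (F : J ⥤ Subobject M) :
    Cocone (F ⋙ underlying) where
  pt := M
  ι := { app := fun j => (F.obj j).arrow }

theorem mono_colimitDesc_arrowCocone [HasColimits C] [AB5 C] {M : C} {J : Type v}
    [SmallCategory J] [IsFiltered J] (F : J ⥤ Subobject M) :
    Mono (colimit.desc _ (arrowCocone F)) := by
  have := IsFiltered.isConnected J
  have : ∀ j, Mono ((arrowCocone F).ι.app j) := fun j => arrow_mono (F.obj j)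
  have := NatTrans.mono_of_mono_app (arrowCocone F).ι
  exact colim.map_mono' (arrowCocone F).ι (colimit.isColimit _) (isColimitConstCocone J M) _
    fun j => (colimit.ι_desc _ j).trans (Category.comp_id _).symm

end Subobject

theorem injective_of_exists_retraction {I : C}
    (h : ∀ {M : C} (f : I ⟶ M) [Mono f], ∃ r : M ⟶ I, f ≫ r = 𝟙 I) : Injective I := by
  refine ⟨fun {X Y} u i _ => ?_⟩
  have : Mono (pushout.inr i u) := Abelian.mono_pushout_of_mono_f i u
  obtain ⟨r, hr⟩ := h (pushout.inr i u)
  exact ⟨pushout.inl i u ≫ r, by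
    rw [← Category.assoc, pushout.condition, Category.assoc, hr, Category.comp_id]⟩

variable [HasLimits C] [HasColimits C] [WellPowered.{v} C]

/- Mathlib's lattice structure on `Subobject X` is universe polymorphic in the size of the
families it takes suprema of; fix that universe to `v`, as `FinGenObj` does. Inside
`namespace Subobject`, plain `sSup` means `Subobject.sSup`, hence `SupSet.sSup` below. -/
noncomputable local instance {X : C} : CompleteLattice (Subobject X) :=
  Subobject.instCompleteLattice.{v}

noncomputable local instance {X : C} : CompleteSemilatticeSup (Subobject X) :=
  Subobject.completeSemilatticeSup.{v}

theorem finGenObj_iff_isCompactElement_top (X : C) :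
    FinGenObj X ↔ IsCompactElement (⊤ : Subobject X) := by
  rw [CompleteLattice.isCompactElement_iff_le_of_directed_sSup_le]
  refine ⟨fun h S hne hdir htop => ⟨⊤, h S hne hdir (top_le_iff.1 htop), le_rfl⟩,
    fun h S hne hdir hS => ?_⟩
  obtain ⟨x, hx, hle⟩ := h S hne hdir hS.ge
  rwa [top_le_iff.1 hle] at hx

theorem finGenObj_iff_of_iso {X Y : C} (e : X ≅ Y) : FinGenObj X ↔ FinGenObj Y := by
  rw [finGenObj_iff_isCompactElement_top, finGenObj_iff_isCompactElement_top,
    ← (Subobject.mapIsoToOrderIso e).isCompactElement_apply_iff, OrderIso.map_top]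

variable [AB5 C]

namespace Subobject

theorem inf_iSup_le_of_isFiltered {M : C} {J : Type v} [SmallCategory J] [IsFiltered J]
    (F : J ⥤ Subobject M) (P : Subobject M) :
    P ⊓ ⨆ j, F.obj j ≤ ⨆ j, P ⊓ F.obj j := by
  have := IsFiltered.isConnected J
  let m : colimit (F ⋙ underlying) ⟶ M := colimit.desc _ (arrowCocone F)
  have hm : ∀ j, colimit.ι (F ⋙ underlying) j ≫ m = (F.obj j).arrow := colimit.ι_desc _
  have : Mono m := mono_colimitDesc_arrowCocone F
  have hle : ⨆ j, F.obj j ≤ mk m := iSup_le fun j => le_mk_of_comm _ (hm j)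
  -- `kernel φ` is the diagram `P ⊓ F j`; by AB5 its colimit is the kernel of `colim φ`.
  let φ := (arrowCocone F).ι ≫ (Functor.const J).map (cokernel.π P.arrow)
  have hexact := colim.exact_mapShortComplex
    (ShortComplex.exact_of_f_is_kernel (ShortComplex.mk (kernel.ι φ) φ (kernel.condition φ))
      (kernelIsKernel φ))
    (colimit.isColimit _) (colimit.isColimit _) (isColimitConstCocone J _)
    (colim.map (kernel.ι φ)) (m ≫ cokernel.π P.arrow) (fun j => by simp)
    (fun j => ((Category.assoc _ _ _).symm.trans (hm j =≫ cokernel.π P.arrow)).trans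
      (Category.comp_id _).symm)
  have hV : (⨆ j, P ⊓ F.obj j).Factors (colim.map (kernel.ι φ) ≫ m) := by
    rw [factors_iff_comp_cokernel_π_eq_zero]
    refine colimit.hom_ext fun j => ?_
    have hP : P.Factors ((kernel.ι φ).app j ≫ (F.obj j).arrow) := by
      rw [factors_iff_comp_cokernel_π_eq_zero, Category.assoc]
      exact (NatTrans.comp_app _ _ j).symm.trans (NatTrans.congr_app (kernel.condition φ) j)
    have := factors_of_le _ (le_iSup (fun j => P ⊓ F.obj j) j)
      ((inf_factors _).2 ⟨hP, factors_comp_arrow _⟩)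
    rw [factors_iff_comp_cokernel_π_eq_zero] at this
    simpa [reassoc_of% (hm j)] using this
  refine (inf_le_inf_left P hle).trans (le_of_factors ?_)
  obtain ⟨a, ha⟩ : ∃ a : ((P ⊓ mk m : Subobject M) : C) ⟶ colimit (F ⋙ underlying),
      a ≫ m = (P ⊓ mk m).arrow :=
    (mk_factors_iff m _).1 (inf_arrow_factors_right P (mk m))
  have ha0 : a ≫ m ≫ cokernel.π P.arrow = 0 := by
    rw [reassoc_of% ha, ← factors_iff_comp_cokernel_π_eq_zero]
    exact inf_arrow_factors_left P (mk m)
  obtain ⟨b, hb⟩ : ∃ b, b ≫ colim.map (kernel.ι φ) = a :=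
    @ShortComplex.Exact.lift' _ _ _ _ _ hexact _ a ha0 (Functor.map_mono colim (kernel.ι φ))
  rw [← ha, ← hb, Category.assoc]
  exact factors_of_factors_right b hV

theorem inf_sSup_of_directedOn {M : C} {S : Set (Subobject M)} (hS : DirectedOn (· ≤ ·) S)
    (P : Subobject M) : P ⊓ SupSet.sSup S = ⨆ T ∈ S, P ⊓ T := by
  refine le_antisymm ?_ (iSup₂_le fun T hT => inf_le_inf_left P (_root_.le_sSup hT))
  obtain rfl | hne := S.eq_empty_or_nonempty
  · simp
  let e := (equivShrink.{v} S).symm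
  have : IsDirectedOrder (Shrink.{v} S) :=
    isDirected_onFun.2 ((directed_comp_iff_of_surjective e.surjective).2 hS.directed_val)
  have : Nonempty (Shrink.{v} S) := ⟨equivShrink.{v} S ⟨_, hne.some_mem⟩⟩
  have hmono : Monotone fun a => (e a : Subobject M) := fun a b h => h
  have hrange : ⨆ a, (e a : Subobject M) = SupSet.sSup S := by
    rw [sSup_eq_iSup', e.iSup_comp (g := fun T : S => (T : Subobject M))]
  calc P ⊓ SupSet.sSup S = P ⊓ ⨆ a, hmono.functor.obj a := by rw [← hrange]; rfl
    _ ≤ ⨆ a, P ⊓ hmono.functor.obj a := inf_iSup_le_of_isFiltered _ P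
    _ ≤ ⨆ T ∈ S, P ⊓ T := iSup_le fun a => le_iSup₂_of_le (e a : Subobject M) (e a).2 le_rfl

theorem exists_maximal_disjoint {M : C} (J : Subobject M) : ∃ N, Maximal (Disjoint J) N := by
  refine zorn_le₀ {N | Disjoint J N} fun c hc hchain =>
    ⟨SupSet.sSup c, ?_, fun _ => _root_.le_sSup⟩
  rw [Set.mem_ofPred_eq, disjoint_iff, inf_sSup_of_directedOn hchain.directedOn, iSup₂_eq_bot]
  exact fun N hN => disjoint_iff.1 (hc hN)

theorem finGenObj_iff_isCompactElement {M : C} (R : Subobject M) :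
    FinGenObj (R : C) ↔ IsCompactElement R := by
  rw [finGenObj_iff_isCompactElement_top, ← (subobjectOrderIso R).isCompactElement_apply_iff,
    OrderIso.map_top, ← Set.Iic.isCompactElement_coe_iff fun s hs => inf_sSup_of_directedOn hs R]
  rfl

end Subobject

theorem exists_retraction_of_mono {I : C}
    (hgen : ∀ X : C, sSup {P : Subobject X | FinGenObj (P : C)} = ⊤) (hI : FinGenObj I)
    (hsplit : ∀ (M : C) (f : I ⟶ M), FinGenObj M → Mono f → ∃ r : M ⟶ I, f ≫ r = 𝟙 I)
    {M : C} (f : I ⟶ M) [Mono f] : ∃ r : M ⟶ I, f ≫ r = 𝟙 I := by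
  obtain ⟨N, hN⟩ := Subobject.exists_maximal_disjoint (Subobject.mk f)
  have := Subobject.mono_comp_cokernel_π_of_disjoint hN.prop
  let g := f ≫ cokernel.π N.arrow
  have hg : IsCompactElement (Subobject.mk g) := (Subobject.finGenObj_iff_isCompactElement _).1
    ((finGenObj_iff_of_iso (Subobject.underlyingIso g)).2 hI)
  have hfg (Q : Subobject (cokernel N.arrow)) (hQ : FinGenObj (Q : C)) : Q ≤ Subobject.mk g := by
    let R := Q ⊔ Subobject.mk g
    let σ : I ⟶ R := (Subobject.underlyingIso g).inv ≫ Subobject.ofLE _ _ le_sup_right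
    have hσ : σ ≫ R.arrow = g := by simp [σ]
    obtain ⟨r, hr⟩ := hsplit R σ ((Subobject.finGenObj_iff_isCompactElement R).2
      (((Subobject.finGenObj_iff_isCompactElement Q).1 hQ).sup hg)) (mono_of_mono_fac hσ)
    exact le_sup_left.trans (Subobject.le_mk_of_retraction g
      (fun _ => Subobject.eq_bot_of_maximal_disjoint hN) σ hσ r hr)
  have : IsIso g := (Subobject.isIso_iff_mk_eq_top g).2 (top_le_iff.1 (hgen _ ▸ sSup_le hfg))
  exact ⟨cokernel.π N.arrow ≫ inv g, by rw [← Category.assoc]; exact IsIso.hom_inv_id g⟩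

end CategoryTheory

theorem stmt_8_general {C : Type u} [Category.{v} C] [Abelian C]
    [HasLimits C] [HasColimits C] [AB5 C] [WellPowered.{v} C]
    (A1 : ∀ X : C, Subobject.sSup.{v} {P : Subobject X | FinGenObj (P : C)} = ⊤)
    (I : C) (hIfg : FinGenObj I)
    (hsplit : ∀ (M : C) (f : I ⟶ M), FinGenObj M → Mono f → ∃ r : M ⟶ I, f ≫ r = 𝟙 I) :
    Injective I :=
  injective_of_exists_retraction fun f _ => exists_retraction_of_mono A1 hIfg hsplit f

/-- In a `k`-linear Grothendieck abelian category in which every object is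
the union of its finitely generated subobjects, a finitely generated object `I` such that
every monomorphism from `I` into a finitely generated object splits is injective. -/
theorem stmt_8 {k : Type*} [Field k] {C : Type u} [Category.{v} C] [Abelian C]
    [Linear k C] [HasLimits C] [HasColimits C] [AB5 C] [WellPowered.{v} C]
    (Gsep : C) (hsep : IsSeparator Gsep)
    (A1 : ∀ X : C, Subobject.sSup.{v} {P : Subobject X | FinGenObj (P : C)} = ⊤)
    (I : C) (hIfg : FinGenObj I)
    (hsplit : ∀ (M : C) (f : I ⟶ M), FinGenObj M → Mono f → ∃ r : M ⟶ I, f ≫ r = 𝟙 I) :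
    Injective I :=
  stmt_8_general A1 I hIfg hsplit
end

section
/- Let $V$ be a vector space over a field $k$. Equip $V^*$ with the finite topology (a net $\lambda_j \to \lambda$ iff for each $v \in V$, $\lambda_j(v) = \lambda(v)$ eventually). Then for every subspace $W \subseteq V$, the annihilator $W^\perp \subseteq V^*$ is closed, and the map $W \mapsto W^\perp$ is an inclusion-reversing bijection between the subspaces of $V$ and the closed subspaces of $V^*$. -/
/-- The finite (`Π`-) topology on the dual space `V^*`: the topology of pointwise
convergence, where the field `k` carries the discrete topology. -/
noncomputable def dualFiniteTopology (k V : Type*) [Field k] [AddCommGroup V]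
    [Module k V] : TopologicalSpace (Module.Dual k V) :=
  TopologicalSpace.induced (fun f (v : V) => f v)
    (@Pi.topologicalSpace V (fun _ => k) (fun _ => ⊥))

/-!
The closure of a subspace `C ⊆ V^*` in the finite topology is its double annihilator
`(C^⊥)^⊥`: a functional `f` killing `C^⊥` is approximated on each finite-dimensional
`U ⊆ V` by elements of `C`, because the restriction of `C` to `U` is a subspace of the
finite-dimensional space `U^*` and hence equal to its own double annihilator. So the closed
subspaces are exactly the annihilators, and the rest is the Galois connection `W ↦ W^⊥`,
whose injectivity and order reversal hold for subspaces of any vector space.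
-/

section

open Module Submodule Topology

variable {k V : Type*} [Field k] [AddCommGroup V] [Module k V]

theorem Submodule.exists_mem_eqOn_of_mem_dualCoannihilator_dualAnnihilator
    {C : Submodule k (Dual k V)} {f : Dual k V} (hf : f ∈ C.dualCoannihilator.dualAnnihilator)
    (I : Finset V) : ∃ g ∈ C, Set.EqOn g f I := by
  let U := span k (I : Set V)
  have : FiniteDimensional k U := FiniteDimensional.span_finset k I
  let r := U.subtype.dualMap
  have hrf : r f ∈ C.map r := by
    rw [← Subspace.dualCoannihilator_dualAnnihilator_eq (W := C.map r), mem_dualAnnihilator]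
    intro u hu
    refine (mem_dualAnnihilator f).mp hf u ((mem_dualCoannihilator _).mpr fun g hg => ?_)
    exact (mem_dualCoannihilator u).mp hu (r g) (mem_map_of_mem hg)
  obtain ⟨g, hg, hgf⟩ := hrf
  exact ⟨g, hg, fun v hv => LinearMap.congr_fun hgf ⟨v, subset_span hv⟩⟩

namespace dualFiniteTopology

attribute [local instance] dualFiniteTopology

theorem nhds_hasBasis (f : Dual k V) :
    (𝓝 f).HasBasis (fun _ : Finset V => True) fun I => {g | Set.EqOn g f I} := by
  let _ : TopologicalSpace k := ⊥
  have _ : DiscreteTopology k := ⟨rfl⟩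
  refine ⟨fun t => ?_⟩
  rw [dualFiniteTopology, nhds_induced, Filter.mem_comap, nhds_pi]
  constructor
  · rintro ⟨u, hu, hut⟩
    obtain ⟨I, s, hs, hsu⟩ := Filter.mem_pi'.mp hu
    refine ⟨I, trivial, fun g hg => hut (hsu fun v hv => ?_)⟩
    simpa [hg hv] using mem_of_mem_nhds (hs v)
  · rintro ⟨I, -, hIt⟩
    refine ⟨(I : Set V).pi fun v => {f v}, ?_, fun g hg => hIt hg⟩
    exact Filter.pi_mem_pi I.finite_toSet fun v _ => by simp [nhds_discrete]

theorem mem_closure_iff {S : Set (Dual k V)} {f : Dual k V} :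
    f ∈ closure S ↔ ∀ I : Finset V, ∃ g ∈ S, Set.EqOn g f I := by
  simp [mem_closure_iff_nhds_basis (nhds_hasBasis f)]

theorem isClosed_dualAnnihilator (W : Submodule k V) :
    IsClosed (W.dualAnnihilator : Set (Dual k V)) := by
  refine closure_subset_iff_isClosed.mp fun f hf => (mem_dualAnnihilator f).mpr fun w hw => ?_
  obtain ⟨g, hg, hgf⟩ := mem_closure_iff.mp hf {w}
  rw [← hgf (Finset.mem_singleton_self w)]
  exact (mem_dualAnnihilator g).mp hg w hw

theorem closure_eq_dualCoannihilator_dualAnnihilator (C : Submodule k (Dual k V)) :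
    closure (C : Set (Dual k V)) = C.dualCoannihilator.dualAnnihilator :=
  (closure_minimal C.le_dualCoannihilator_dualAnnihilator (isClosed_dualAnnihilator _)).antisymm
    fun _ hf => mem_closure_iff.mpr (exists_mem_eqOn_of_mem_dualCoannihilator_dualAnnihilator hf)

theorem dualCoannihilator_dualAnnihilator_eq_of_isClosed {C : Submodule k (Dual k V)}
    (hC : IsClosed (C : Set (Dual k V))) : C.dualCoannihilator.dualAnnihilator = C :=
  SetLike.coe_injective <|
    (closure_eq_dualCoannihilator_dualAnnihilator C).symm.trans hC.closure_eq

end dualFiniteTopology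

end

/-- In the finite topology on `V^*`, every annihilator `W^⊥` is closed,
and `W ↦ W^⊥` is an inclusion-reversing bijection between subspaces of `V` and closed
subspaces of `V^*`. -/
theorem stmt_14 {k V : Type*} [Field k] [AddCommGroup V] [Module k V] :
    (∀ W : Submodule k V,
      @IsClosed _ (dualFiniteTopology k V) (W.dualAnnihilator : Set (Module.Dual k V))) ∧
    Function.Injective (fun W : Submodule k V => W.dualAnnihilator) ∧
    (∀ Csub : Submodule k (Module.Dual k V),
      @IsClosed _ (dualFiniteTopology k V) (Csub : Set (Module.Dual k V)) →
      ∃ W : Submodule k V, W.dualAnnihilator = Csub) ∧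
    (∀ W₁ W₂ : Submodule k V, W₁ ≤ W₂ ↔ W₂.dualAnnihilator ≤ W₁.dualAnnihilator) := by
  refine ⟨dualFiniteTopology.isClosed_dualAnnihilator, fun _ _ => Subspace.dualAnnihilator_inj.mp,
    fun C hC => ⟨C.dualCoannihilator, ?_⟩,
    fun _ _ => Subspace.dualAnnihilator_le_dualAnnihilator_iff.symm⟩
  exact dualFiniteTopology.dualCoannihilator_dualAnnihilator_eq_of_isClosed hC
end

section
/- Let $\mathfrak{G}$ be an upwards $k$-linear category with objects indexed by $\mathbb{N}$ and finite-dimensional Hom spaces. Then a $\mathfrak{G}$-module $M$ has finite length if and only if $M_n = M([n])$ is finite-dimensional for all $n$ and $M_n = 0$ for all but finitely many $n$. Moreover, each principal injective $\mathbf{I}_n$ (given by $\mathbf{I}_n(y) = \operatorname{Hom}(y, [n])^*$) has finite length, and every finite-length $\mathfrak{G}$-module embeds into a finite direct sum of principal injectives. -/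
/-
Subfunctors of `M` are families of submodules `S y ⊆ M_y` stable under the action, so finite
length of `M` is about chains of such families. If every `M_n` is finite-dimensional and only
finitely many are nonzero, the total dimension `∑ₙ dim P_n` strictly increases along a chain of
subobjects and bounds its length. Conversely, if some `M_x` is infinite-dimensional, the
subfunctors generated by finite-dimensional subspaces of `M_x` stay finite-dimensional at `x`
(because `End x` is), so one can always add a vector missing from the current one: an infinite
ascending chain. If infinitely many `M_n` are nonzero, upwardness makes the subfunctors generated
in degrees `≥ n` vanish below `n` and fill `M_n`, an infinite descending chain.
`𝐈_n` meets the criterion because `Hom([m], [n]) = 0` for `m > n`, and a finite-length `M` embeds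
into the sum of the `𝐈_n` through the morphisms `M ⟶ 𝐈_n` attached to a basis of each nonzero
`M_n^*`.
-/

open CategoryTheory CategoryTheory.Limits

universe v u w

/-- The principal injective module `𝐈_x` over a `k`-linear category `G`, given by
`𝐈_x(y) = Hom_G(y, x)^*`. -/
noncomputable def prinInj (k : Type w) [Field k] {G : Type u} [Category.{v} G]
    [Preadditive G] [CategoryTheory.Linear k G] (x : G) : G ⥤ ModuleCat.{max v w} k where
  obj y := ModuleCat.of k (Module.Dual k (y ⟶ x))
  map {y z} f := ModuleCat.ofHom (LinearMap.dualMap (CategoryTheory.Linear.leftComp k x f))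
  map_id := by
    intro y; ext φ : 2
    refine LinearMap.ext fun g => ?_
    simp [LinearMap.dualMap_apply, CategoryTheory.Linear.leftComp]
  map_comp := by
    intro y z w f g; ext φ : 2
    refine LinearMap.ext fun h => ?_
    simp [LinearMap.dualMap_apply, CategoryTheory.Linear.leftComp]

/-- An object has finite length if the lengths of strictly increasing chains of
subobjects are bounded. -/
def FinLenObj {D : Type u} [Category.{v} D] (X : D) : Prop :=
  ∃ n : ℕ, ∀ s : Fin n → Subobject X, ¬ StrictMono s

theorem CategoryTheory.NatTrans.isIso_of_isIso_app_obj {C : Type u} [Category.{v} C]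
    {D : Type*} [Category D] {obj : ℕ → C} (hsurj : ∀ X : C, ∃ n, Nonempty (X ≅ obj n)) {F G : C ⥤ D} (α : F ⟶ G)
    (h : ∀ n, IsIso (α.app (obj n))) : IsIso α := by
  refine @NatIso.isIso_of_isIso_app _ _ _ _ _ _ α fun y => ?_
  obtain ⟨n, ⟨e⟩⟩ := hsurj y
  have := h n
  have : IsIso (α.app y ≫ G.map e.hom) := by rw [← α.naturality]; infer_instance
  exact IsIso.of_isIso_comp_right _ (G.map e.hom)

theorem exists_mono_sigma_of_cancel_zero {A : Type*} [Category A] [Preadditive A] {ι : Type*}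
    [Finite ι] {X : A} {Y : ι → A} [HasCoproduct Y] (f : ∀ i, X ⟶ Y i)
    (hf : ∀ ⦃Z : A⦄ (g : Z ⟶ X), (∀ i, g ≫ f i = 0) → g = 0) : ∃ u : X ⟶ ∐ Y, Mono u := by
  have := HasBiproduct.of_hasCoproduct Y
  have : Mono (biproduct.lift f) := Preadditive.mono_of_cancel_zero _ fun g hg =>
    hf g fun i => by simpa using hg =≫ biproduct.π Y i
  exact ⟨biproduct.lift f ≫ (biproduct.isoCoproduct Y).hom, inferInstance⟩

section FinLenObj

variable {D : Type*} [Category D] {X : D}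

theorem FinLenObj.not_strictMono (h : FinLenObj X) (s : ℕ → Subobject X) : ¬ StrictMono s := by
  obtain ⟨n, hn⟩ := h
  exact fun hs => hn (fun i => s i) (hs.comp Fin.val_strictMono)

theorem FinLenObj.not_strictAnti (h : FinLenObj X) (s : ℕ → Subobject X) : ¬ StrictAnti s := by
  obtain ⟨n, hn⟩ := h
  exact fun hs => hn (fun i => s (Fin.rev i))
    ((hs.comp_strictMono Fin.val_strictMono).comp Fin.rev_strictAnti)

theorem finLenObj_of_strictMono_of_le {d : ℕ} {f : Subobject X → ℕ} (hf : StrictMono f)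
    (hd : ∀ P, f P ≤ d) : FinLenObj X := by
  refine ⟨d + 2, fun s hs => ?_⟩
  have := Fintype.card_le_of_injective
    (fun i => (⟨f (s i), Nat.lt_succ_of_le (hd _)⟩ : Fin (d + 1)))
    fun i j hij => (hf.comp hs).injective (Fin.mk.inj_iff.mp hij)
  simp at this

end FinLenObj

structure LinearSubfunctor {R : Type*} [Ring R] {C : Type u} [Category.{v} C]
    (M : C ⥤ ModuleCat.{w} R) where
  obj : ∀ y, Submodule R (M.obj y)
  map_mem : ∀ {y z : C} (f : y ⟶ z) {v : M.obj y}, v ∈ obj y → M.map f v ∈ obj z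

namespace LinearSubfunctor

variable {R : Type*} [Ring R] {C : Type u} [Category.{v} C] {M : C ⥤ ModuleCat.{w} R}

instance : PartialOrder (LinearSubfunctor M) :=
  PartialOrder.lift obj fun S T h => by cases S; cases T; congr

theorem lt_of_le_of_not_le_obj {S T : LinearSubfunctor M} (h : S ≤ T) {y : C}
    (hy : ¬ T.obj y ≤ S.obj y) : S < T :=
  lt_of_le_not_ge h fun h' => hy (h' y)

noncomputable def toFunctor (S : LinearSubfunctor M) : C ⥤ ModuleCat.{w} R where
  obj y := ModuleCat.of R (S.obj y)
  map f := ModuleCat.ofHom ((M.map f).hom.restrict fun _ => S.map_mem f)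

noncomputable def ι (S : LinearSubfunctor M) : S.toFunctor ⟶ M where
  app y := ModuleCat.ofHom (S.obj y).subtype

instance (S : LinearSubfunctor M) : Mono S.ι :=
  have (y : C) : Mono (S.ι.app y) := (ModuleCat.mono_iff_injective _).mpr Subtype.val_injective
  NatTrans.mono_of_mono_app _

noncomputable def toSubobject (S : LinearSubfunctor M) : Subobject M := Subobject.mk S.ι

theorem toSubobject_le_toSubobject_iff {S T : LinearSubfunctor M} :
    S.toSubobject ≤ T.toSubobject ↔ S ≤ T := by
  refine ⟨fun h y v hv => ?_, fun h => ?_⟩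
  · have hcomp := congr_arg (fun α => α.app y ⟨v, hv⟩) (Subobject.ofMkLEMk_comp h)
    change ((Subobject.ofMkLEMk S.ι T.ι h).app y ⟨v, hv⟩ : T.obj y).val = v at hcomp
    exact hcomp ▸ Subtype.property _
  · exact Subobject.mk_le_mk_of_comm
      { app y := ModuleCat.ofHom (Submodule.inclusion (h y)) } rfl

theorem toSubobject_strictMono : StrictMono (toSubobject : LinearSubfunctor M → Subobject M) :=
  fun _ _ h => lt_of_le_not_ge (toSubobject_le_toSubobject_iff.mpr h.le)
    fun h' => h.not_ge (toSubobject_le_toSubobject_iff.mp h')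

end LinearSubfunctor

section Generated

variable {R : Type*} [CommRing R] {C : Type u} [Category.{v} C] [Preadditive C]
  [CategoryTheory.Linear R C] (M : C ⥤ ModuleCat.{w} R) [M.Additive] [M.Linear R]

noncomputable def CategoryTheory.Functor.actionₗ (x y : C) : (x ⟶ y) →ₗ[R] M.obj x →ₗ[R] M.obj y :=
  ModuleCat.homLinearEquiv.toLinearMap ∘ₗ M.mapLinearMap R

@[simp]
theorem CategoryTheory.Functor.actionₗ_apply {x y : C} (f : x ⟶ y) (v : M.obj x) :
    M.actionₗ x y f v = M.map f v :=
  rfl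

namespace LinearSubfunctor

@[simps! obj]
noncomputable def generated {ι : Type*} (X : ι → C) (V : ∀ i, Submodule R (M.obj (X i))) :
    LinearSubfunctor M where
  obj y := ⨆ i, Submodule.map₂ (M.actionₗ (X i) y) ⊤ (V i)
  map_mem {y z} g v hv := by
    suffices h : (⨆ i, Submodule.map₂ (M.actionₗ (X i) y) ⊤ (V i)) ≤
        (⨆ i, Submodule.map₂ (M.actionₗ (X i) z) ⊤ (V i)).comap (M.map g).hom from h hv
    refine iSup_le fun i => Submodule.map₂_le.mpr fun f _ w hw => ?_
    rw [Submodule.mem_comap, Functor.actionₗ_apply, ← ModuleCat.comp_apply, ← M.map_comp]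
    exact Submodule.mem_iSup_of_mem i (Submodule.apply_mem_map₂ _ Submodule.mem_top hw)

variable {M} {ι : Type*} {X : ι → C} {V : ∀ i, Submodule R (M.obj (X i))}

theorem le_generated_obj (i : ι) : V i ≤ (generated M X V).obj (X i) := fun v hv =>
  Submodule.mem_iSup_of_mem i (by
    simpa using Submodule.apply_mem_map₂ (M.actionₗ (X i) (X i)) (m := 𝟙 _) Submodule.mem_top hv)

theorem generated_mono {W : ∀ i, Submodule R (M.obj (X i))} (h : ∀ i, V i ≤ W i) :
    generated M X V ≤ generated M X W := fun y => by
  rw [generated_obj, generated_obj]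
  exact iSup_mono fun i => Submodule.map₂_le_map₂_right (h i)

theorem generated_obj_eq_bot {y : C} (h : ∀ i (f : X i ⟶ y), f = 0) :
    (generated M X V).obj y = ⊥ := by
  rw [generated_obj]
  exact eq_bot_iff.mpr <| iSup_le fun i => Submodule.map₂_le.mpr fun f _ w _ => by simp [h i f]

theorem generated_obj_fg [Finite ι] {y : C} [∀ i, Module.Finite R (X i ⟶ y)]
    (hV : ∀ i, (V i).FG) : ((generated M X V).obj y).FG := by
  refine generated_obj M X V y ▸ Submodule.fg_iSup _ fun i => ?_
  obtain ⟨s, hs⟩ := Module.Finite.fg_top (R := R) (M := X i ⟶ y)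
  obtain ⟨t, ht⟩ := hV i
  rw [← hs, ← ht, Submodule.map₂_span_span]
  exact Submodule.fg_span (s.finite_toSet.image2 _ t.finite_toSet)

end LinearSubfunctor

end Generated

section FiniteLength

variable {R : Type*} [CommRing R] {C : Type u} [Category.{v} C] [Preadditive C]
  [CategoryTheory.Linear R C] {M : C ⥤ ModuleCat.{w} R} [M.Additive] [M.Linear R]

open LinearSubfunctor

theorem FinLenObj.finite_obj (hM : FinLenObj M) (x : C) [Module.Finite R (x ⟶ x)] :
    Module.Finite R (M.obj x) := by
  by_contra hx
  let gen (W : Submodule R (M.obj x)) : LinearSubfunctor M :=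
    generated M (fun _ : Unit => x) fun _ => W
  have hgen_fg (W : Submodule R (M.obj x)) (hW : W.FG) : ((gen W).obj x).FG :=
    generated_obj_fg fun _ => hW
  have hnext (W : Submodule R (M.obj x)) (hW : W.FG) : ∃ v, v ∉ (gen W).obj x := by
    by_contra! h
    exact hx ⟨Submodule.eq_top_iff'.mpr h ▸ hgen_fg W hW⟩
  choose next hnext using hnext
  let W (n : ℕ) : {W : Submodule R (M.obj x) // W.FG} := Nat.rec ⟨⊥, Submodule.fg_bot⟩
    (fun _ W => ⟨(gen W.1).obj x ⊔ R ∙ next W.1 W.2,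
      (hgen_fg _ W.2).sup (Submodule.fg_span_singleton _)⟩) n
  refine hM.not_strictMono (fun n => (gen (W n).1).toSubobject)
    (toSubobject_strictMono.comp (strictMono_nat_of_lt_succ fun n => ?_))
  have hle : (W n).1 ≤ (W (n + 1)).1 :=
    (le_generated_obj (V := fun _ => (W n).1) ()).trans le_sup_left
  refine lt_of_le_of_not_le_obj (generated_mono fun _ => hle) (y := x)
    fun h => hnext _ (W n).2 (h ?_)
  exact le_generated_obj () (Submodule.mem_sup_right (Submodule.mem_span_singleton_self _))

end FiniteLength

section Upwards

variable {R : Type*} [CommRing R] {C : Type u} [Category.{v} C] [Preadditive C]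
  [CategoryTheory.Linear R C] (obj : ℕ → C) (M : C ⥤ ModuleCat.{w} R) [M.Additive] [M.Linear R]

open LinearSubfunctor

noncomputable def degreeGE (m : ℕ) : LinearSubfunctor M :=
  generated M (fun j : {j : ℕ // m ≤ j} => obj j) fun _ => ⊤

variable {M}

theorem degreeGE_obj_of_le {m j : ℕ} (h : m ≤ j) : (degreeGE obj M m).obj (obj j) = ⊤ :=
  eq_top_iff.mpr <| le_generated_obj (M := M) (X := fun j : {j : ℕ // m ≤ j} => obj j)
    (V := fun _ => ⊤) ⟨j, h⟩

theorem degreeGE_obj_of_lt (hup : ∀ (n m : ℕ) (f : obj n ⟶ obj m), f ≠ 0 → n ≤ m) {m j : ℕ}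
    (h : j < m) : (degreeGE obj M m).obj (obj j) = ⊥ :=
  generated_obj_eq_bot fun i f => by
    by_contra hf
    exact absurd (hup _ _ f hf) (not_le.mpr (h.trans_le i.2))

theorem degreeGE_antitone : Antitone (degreeGE obj M) := fun m m' h y => by
  simp only [degreeGE, generated_obj]
  exact iSup_le fun j => le_iSup_of_le ⟨j.1, h.trans j.2⟩ le_rfl

theorem FinLenObj.finite_setOf_not_isZero
    (hup : ∀ (n m : ℕ) (f : obj n ⟶ obj m), f ≠ 0 → n ≤ m) (hM : FinLenObj M) :
    {n | ¬ IsZero (M.obj (obj n))}.Finite := by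
  by_contra hinf
  let deg := Nat.nth fun n => ¬ IsZero (M.obj (obj n))
  refine hM.not_strictAnti (fun i => (degreeGE obj M (deg i)).toSubobject)
    (toSubobject_strictMono.comp_strictAnti (strictAnti_nat_of_succ_lt fun i => ?_))
  have hlt : deg i < deg (i + 1) := Nat.nth_strictMono hinf (Nat.lt_succ_self i)
  refine lt_of_le_of_not_le_obj (degreeGE_antitone obj hlt.le) (y := obj (deg i)) fun h => ?_
  rw [degreeGE_obj_of_le obj le_rfl, degreeGE_obj_of_lt obj hup hlt, top_le_iff,
    subsingleton_iff_bot_eq_top, Submodule.subsingleton_iff] at h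
  exact Nat.nth_mem_of_infinite hinf i (ModuleCat.isZero_of_subsingleton _)

end Upwards

section FieldCoefficients

variable {k : Type*} [Field k] {C : Type u} [Category.{v} C]

open Module

theorem finrank_obj_le_of_mono {F G : C ⥤ ModuleCat.{w} k} (α : F ⟶ G) [Mono α] (y : C)
    [FiniteDimensional k (G.obj y)] : finrank k (F.obj y) ≤ finrank k (G.obj y) :=
  LinearMap.finrank_le_finrank_of_injective (f := (α.app y).hom)
    ((ModuleCat.mono_iff_injective _).mp inferInstance)

instance CategoryTheory.Subobject.finiteDimensional_obj {M : C ⥤ ModuleCat.{w} k}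
    (P : Subobject M) (y : C) [FiniteDimensional k (M.obj y)] : FiniteDimensional k ((P : C ⥤ ModuleCat k).obj y) :=
  FiniteDimensional.of_injective (P.arrow.app y).hom
    ((ModuleCat.mono_iff_injective _).mp inferInstance)

theorem CategoryTheory.Subobject.eq_of_le_of_finrank_le {obj : ℕ → C}
    (hsurj : ∀ X : C, ∃ n, Nonempty (X ≅ obj n)) {M : C ⥤ ModuleCat.{w} k}
    [∀ n, FiniteDimensional k (M.obj (obj n))] {P Q : Subobject M} (hPQ : P ≤ Q)
    (hrank : ∀ n, finrank k ((Q : C ⥤ ModuleCat k).obj (obj n)) ≤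
      finrank k ((P : C ⥤ ModuleCat k).obj (obj n))) : P = Q := by
  have : IsIso (Subobject.ofLE P Q hPQ) := NatTrans.isIso_of_isIso_app_obj hsurj _ fun n => by
    have hinj : Function.Injective ((Subobject.ofLE P Q hPQ).app (obj n)) :=
      (ModuleCat.mono_iff_injective _).mp inferInstance
    refine (ConcreteCategory.isIso_iff_bijective _).mpr ⟨hinj, ?_⟩
    exact (LinearMap.injective_iff_surjective_of_finrank_eq_finrank
      ((finrank_obj_le_of_mono (Subobject.ofLE P Q hPQ) _).antisymm (hrank n))).mp hinj
  exact Subobject.eq_of_comm (asIso (Subobject.ofLE P Q hPQ)) (Subobject.ofLE_arrow hPQ)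

theorem finLenObj_of_finiteDimensional_of_finite {obj : ℕ → C}
    (hsurj : ∀ X : C, ∃ n, Nonempty (X ≅ obj n)) (M : C ⥤ ModuleCat.{w} k)
    [∀ n, FiniteDimensional k (M.obj (obj n))] (hfin : {n | ¬ IsZero (M.obj (obj n))}.Finite) :
    FinLenObj M := by
  let dim (P : Subobject M) : ℕ :=
    ∑ n ∈ hfin.toFinset, finrank k ((P : C ⥤ ModuleCat k).obj (obj n))
  refine finLenObj_of_strictMono_of_le (f := dim) (fun P Q hPQ => ?_)
    fun P => Finset.sum_le_sum fun n _ => finrank_obj_le_of_mono P.arrow (obj n)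
  refine Finset.sum_lt_sum (fun n _ => finrank_obj_le_of_mono (Subobject.ofLE P Q hPQ.le) _) ?_
  by_contra! h
  refine hPQ.ne (Subobject.eq_of_le_of_finrank_le hsurj hPQ.le fun n => ?_)
  by_cases hn : n ∈ hfin.toFinset
  · exact h n hn
  · have : Subsingleton (M.obj (obj n)) :=
      ModuleCat.subsingleton_of_isZero (not_not.mp (mt hfin.mem_toFinset.mpr hn))
    exact (finrank_obj_le_of_mono Q.arrow (obj n)).trans (finrank_zero_of_subsingleton.trans_le
      (Nat.zero_le _))

end FieldCoefficients

section PrincipalInjective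

variable {k : Type w} [Field k] {C : Type u} [Category.{v} C] [Preadditive C]
  [CategoryTheory.Linear k C]

open Module

theorem isZero_prinInj_obj {x y : C} (h : ∀ f : y ⟶ x, f = 0) : IsZero ((prinInj k x).obj y) :=
  show IsZero (ModuleCat.of k _) from
  have : Subsingleton (Dual k (y ⟶ x)) :=
    ⟨fun φ ψ => LinearMap.ext fun f => by rw [h f, map_zero, map_zero]⟩
  ModuleCat.isZero_of_subsingleton _

theorem finLenObj_prinInj {obj : ℕ → C} (hsurj : ∀ X : C, ∃ n, Nonempty (X ≅ obj n))
    (hup : ∀ (n m : ℕ) (f : obj n ⟶ obj m), f ≠ 0 → n ≤ m) (n : ℕ)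
    [∀ m, FiniteDimensional k (obj m ⟶ obj n)] : FinLenObj (prinInj k (obj n)) := by
  have (m : ℕ) : FiniteDimensional k ((prinInj k (obj n)).obj (obj m)) :=
    inferInstanceAs (FiniteDimensional k (Dual k (obj m ⟶ obj n)))
  refine finLenObj_of_finiteDimensional_of_finite hsurj _ ((Set.finite_Iic n).subset fun m hm => ?_)
  by_contra hmn
  exact hm (isZero_prinInj_obj fun f => by_contra fun hf => hmn (hup m n f hf))

variable (M : C ⥤ ModuleCat.{max v w} k) [M.Additive] [M.Linear k]

/-- The morphism corresponding to `φ` under `Hom(M, 𝐈_x) ≅ M_x^*`. -/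
noncomputable def toPrinInj (x : C) (φ : Dual k (M.obj x)) : M ⟶ prinInj k x where
  app y := ModuleCat.ofHom ((M.actionₗ y x).flip.compr₂ φ)
  naturality y z g := by
    ext v
    refine LinearMap.ext fun f => ?_
    change φ (M.map f (M.map g v)) = φ (M.map (g ≫ f) v)
    rw [M.map_comp, ModuleCat.comp_apply]

theorem eq_zero_of_toPrinInj_app_eq_zero {obj : ℕ → C}
    (hsurj : ∀ X : C, ∃ n, Nonempty (X ≅ obj n)) [∀ n, FiniteDimensional k (M.obj (obj n))]
    {y : C} {v : M.obj y} (h : ∀ n, ¬ IsZero (M.obj (obj n)) → ∀ i,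
      (toPrinInj M (obj n) ((finBasis k (M.obj (obj n))).coord i)).app y v = 0) : v = 0 := by
  obtain ⟨n, ⟨e⟩⟩ := hsurj y
  suffices h0 : M.map e.hom v = 0 by
    rw [← ModuleCat.id_apply (M.obj y) v, ← M.map_id, ← e.hom_inv_id, M.map_comp,
      ModuleCat.comp_apply, h0, map_zero]
  by_cases hz : IsZero (M.obj (obj n))
  · exact (ModuleCat.subsingleton_of_isZero hz).elim _ _
  · exact (finBasis k _).forall_coord_eq_zero_iff.mp fun i => LinearMap.congr_fun (h n hz i) e.hom

theorem exists_mono_sigma_prinInj {obj : ℕ → C} (hsurj : ∀ X : C, ∃ n, Nonempty (X ≅ obj n))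
    [∀ n, FiniteDimensional k (M.obj (obj n))] (hfin : {n | ¬ IsZero (M.obj (obj n))}.Finite) :
    ∃ (N : ℕ) (m : Fin N → ℕ) (f : M ⟶ ∐ fun i => prinInj k (obj (m i))), Mono f := by
  let I := Σ n : hfin.toFinset, Fin (finrank k (M.obj (obj n)))
  let Y (p : I) := prinInj k (obj p.1)
  obtain ⟨u, hu⟩ := exists_mono_sigma_of_cancel_zero (Y := Y)
    (fun p => toPrinInj M (obj p.1) ((finBasis k _).coord p.2)) fun Z g hg => by
      ext y w
      refine eq_zero_of_toPrinInj_app_eq_zero M hsurj fun n hn i => ?_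
      simpa using congr_arg (fun α => α.app y w) (hg ⟨⟨n, hfin.mem_toFinset.mpr hn⟩, i⟩)
  let e := (Fintype.equivFin I).symm
  exact ⟨_, fun j => (e j).1, u ≫ (Sigma.reindex e Y).inv, inferInstance⟩

end PrincipalInjective

theorem stmt_17_general {k : Type w} [Field k] {C : Type u} [Category.{v} C] [Preadditive C]
    [CategoryTheory.Linear k C]
    (obj : ℕ → C)
    (hsurj : ∀ X : C, ∃ n : ℕ, Nonempty (X ≅ obj n))
    (hup : ∀ (n m : ℕ) (f : obj n ⟶ obj m), f ≠ 0 → n ≤ m)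
    (hfd : ∀ x y : C, FiniteDimensional k (x ⟶ y)) :
    (∀ (M : C ⥤ ModuleCat.{max v w} k) [M.Additive] [Functor.Linear k M],
      (FinLenObj M ↔ ((∀ n : ℕ, FiniteDimensional k (M.obj (obj n))) ∧
        {n : ℕ | ¬ IsZero (M.obj (obj n))}.Finite))) ∧
    (∀ n : ℕ, FinLenObj (prinInj k (obj n))) ∧
    (∀ (M : C ⥤ ModuleCat.{max v w} k) [M.Additive] [Functor.Linear k M], FinLenObj M →
      ∃ (N : ℕ) (m : Fin N → ℕ)
        (f : M ⟶ ∐ (fun i : Fin N => prinInj k (obj (m i)))), Mono f) := by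
  have criterion (M : C ⥤ ModuleCat.{max v w} k) [M.Additive] [Functor.Linear k M] :
      FinLenObj M ↔ ((∀ n : ℕ, FiniteDimensional k (M.obj (obj n))) ∧
        {n : ℕ | ¬ IsZero (M.obj (obj n))}.Finite) :=
    ⟨fun hM => ⟨fun n => hM.finite_obj (obj n), hM.finite_setOf_not_isZero obj hup⟩,
      fun ⟨_, hfin⟩ => finLenObj_of_finiteDimensional_of_finite hsurj M hfin⟩
  refine ⟨criterion, fun n => finLenObj_prinInj hsurj hup n, fun M _ _ hM => ?_⟩
  obtain ⟨_, hfin⟩ := (criterion M).mp hM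
  exact exists_mono_sigma_prinInj M hsurj hfin

/-- For an upwards `k`-linear category with objects indexed by `ℕ` and
finite-dimensional Hom spaces: a module has finite length iff all its values are
finite-dimensional and all but finitely many vanish; each principal injective has finite
length; and every finite-length module embeds into a finite direct sum of principal
injectives. -/
theorem stmt_17 {k : Type w} [Field k] {C : Type u} [Category.{v} C] [Preadditive C]
    [CategoryTheory.Linear k C]
    (obj : ℕ → C)
    (hsurj : ∀ X : C, ∃ n : ℕ, Nonempty (X ≅ obj n))
    (hdist : ∀ n m : ℕ, Nonempty (obj n ≅ obj m) → n = m)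
    (hup : ∀ (n m : ℕ) (f : obj n ⟶ obj m), f ≠ 0 → n ≤ m)
    (hfd : ∀ x y : C, FiniteDimensional k (x ⟶ y)) :
    (∀ (M : C ⥤ ModuleCat.{max v w} k) [M.Additive] [Functor.Linear k M],
      (FinLenObj M ↔ ((∀ n : ℕ, FiniteDimensional k (M.obj (obj n))) ∧
        {n : ℕ | ¬ IsZero (M.obj (obj n))}.Finite))) ∧
    (∀ n : ℕ, FinLenObj (prinInj k (obj n))) ∧
    (∀ (M : C ⥤ ModuleCat.{max v w} k) [M.Additive] [Functor.Linear k M], FinLenObj M →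
      ∃ (N : ℕ) (m : Fin N → ℕ)
        (f : M ⟶ ∐ (fun i : Fin N => prinInj k (obj (m i)))), Mono f) :=
  stmt_17_general obj hsurj hup hfd
end
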